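/- arXiv:2407.07910 — 2 statements merged into one kernel-verified Lean document; each statement's English description precedes it below -/
import Mathlib

section
/- Let a < b be real numbers and let z : [a,b] → ℂ be continuous with z(t) ≠ 0 for every t ∈ [a,b]. Suppose Im(z(a)) = 0 and Im(z(t)) ≠ 0 for every t ∈ (a,b]. Then for every continuous argument θ of z one has |θ(b) − θ(a)| < π. -/
open Real Set

/-- Lemma 1 (second point) of the paper: if the imaginary part of a nonvanishing
continuous curve vanishes at the initial point and is nonzero afterwards, then the
total phase variation is strictly less than `π`. -/
theorem lemma1_second_point (a b : ℝ) (hab : a < b) (z : ℝ → ℂ)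
    (hz : ContinuousOn z (Icc a b)) (hz0 : ∀ t ∈ Icc a b, z t ≠ 0)
    (hima : (z a).im = 0) (him : ∀ t ∈ Ioc a b, (z t).im ≠ 0)
    (θ : ℝ → ℝ) (hθ : ContinuousOn θ (Icc a b))
    (harg : ∀ t ∈ Icc a b, z t = (‖z t‖ : ℂ) * Complex.exp (Complex.I * θ t)) :
    |θ b - θ a| < π := by
  have ha : a ∈ Icc a b := ⟨le_refl a, hab.le⟩
  have hb : b ∈ Icc a b := ⟨hab.le, le_refl b⟩
  have key : ∀ t ∈ Icc a b, (z t).im = ‖z t‖ * Real.sin (θ t) := by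
    intro t ht
    rw [harg t ht, mul_comm Complex.I]
    simp [Complex.exp_mul_I, Complex.mul_im, Complex.sin_ofReal_re, Complex.cos_ofReal_im]
  have hsina : Real.sin (θ a) = 0 := by
    have h0 : ‖z a‖ ≠ 0 := norm_ne_zero_iff.mpr (hz0 a ha)
    have := key a ha
    rw [hima] at this
    exact (mul_eq_zero.mp this.symm).resolve_left h0
  obtain ⟨k, hk⟩ : ∃ k : ℤ, θ a = k * π :=
    (Real.sin_eq_zero_iff.mp hsina).imp fun n h => h.symm
  have hsin : ∀ t ∈ Ioc a b, Real.sin (θ t) ≠ 0 := by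
    intro t ht hs
    have ht' : t ∈ Icc a b := Ioc_subset_Icc_self ht
    apply him t ht
    rw [key t ht', hs, mul_zero]
  by_contra h
  push_neg at h
  rcases le_abs.mp h with h1 | h1
  · -- θ b ≥ θ a + π = (k+1)π
    have hmem : (k : ℝ) * π + π ∈ Icc (θ a) (θ b) := by
      constructor
      · rw [hk]; linarith [Real.pi_pos]
      · linarith [hk]
    obtain ⟨s, hs, hθs⟩ := intermediate_value_Icc hab.le hθ hmem
    have hsa : s ≠ a := by
      intro h'
      rw [h', hk] at hθs
      have := Real.pi_pos
      linarith
    have : Real.sin (θ s) = 0 := by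
      rw [hθs]
      have : (k : ℝ) * π + π = ((k + 1 : ℤ) : ℝ) * π := by push_cast; ring
      rw [this, Real.sin_int_mul_pi]
    exact hsin s ⟨lt_of_le_of_ne hs.1 (Ne.symm hsa), hs.2⟩ this
  · -- θ b ≤ θ a - π = (k-1)π
    have hmem : (k : ℝ) * π - π ∈ Icc (θ b) (θ a) := by
      constructor
      · linarith [hk]
      · rw [hk]; linarith [Real.pi_pos]
    obtain ⟨s, hs, hθs⟩ := intermediate_value_Icc' hab.le hθ hmem
    have hsa : s ≠ a := by
      intro h'
      rw [h', hk] at hθs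
      have := Real.pi_pos
      linarith
    have : Real.sin (θ s) = 0 := by
      rw [hθs]
      have : (k : ℝ) * π - π = ((k - 1 : ℤ) : ℝ) * π := by push_cast; ring
      rw [this, Real.sin_int_mul_pi]
    exact hsin s ⟨lt_of_le_of_ne hs.1 (Ne.symm hsa), hs.2⟩ this
end

section
/- Let a < b be real numbers and let z : [a,b] → ℂ be continuous with z(t) ≠ 0 for every t ∈ [a,b]. Suppose Im(z(a)) = 0 and that there is exactly one t* ∈ (a,b] with Im(z(t*)) = 0, while Im(z(t)) ≠ 0 for all other t ∈ (a,b]. Then for every continuous argument θ of z one has |θ(b) − θ(a)| < 2π. -/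
open Real Set

/-- Lemma 1 (third point) of the paper: if the imaginary part of a nonvanishing
continuous curve vanishes at the initial point and at exactly one later point, being
nonzero elsewhere, then the total phase variation is strictly less than `2π`. -/
theorem lemma1_third_point (a b : ℝ) (hab : a < b) (z : ℝ → ℂ)
    (hz : ContinuousOn z (Icc a b)) (hz0 : ∀ t ∈ Icc a b, z t ≠ 0)
    (hima : (z a).im = 0) (tstar : ℝ) (htstar : tstar ∈ Ioc a b)
    (himstar : (z tstar).im = 0)
    (him : ∀ t ∈ Ioc a b, t ≠ tstar → (z t).im ≠ 0)
    (θ : ℝ → ℝ) (hθ : ContinuousOn θ (Icc a b))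
    (harg : ∀ t ∈ Icc a b, z t = (‖z t‖ : ℂ) * Complex.exp (Complex.I * θ t)) :
    |θ b - θ a| < 2 * π := by
  have hπ : (0:ℝ) < π := Real.pi_pos
  have ha : a ∈ Icc a b := ⟨le_refl a, hab.le⟩
  have hb : b ∈ Icc a b := ⟨hab.le, le_refl b⟩
  have hts : tstar ∈ Icc a b := ⟨htstar.1.le, htstar.2⟩
  -- the imaginary part vanishes iff the sine of the argument vanishes
  have hsin : ∀ t ∈ Icc a b, ((z t).im = 0 ↔ Real.sin (θ t) = 0) := by
    intro t ht
    rw [harg t ht, mul_comm Complex.I]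
    simp [Complex.mul_im, Complex.exp_ofReal_mul_I_im, Complex.exp_ofReal_mul_I_re,
      mul_eq_zero, norm_eq_zero, hz0 t ht]
  -- intermediate value theorem helper
  have key : ∀ s ∈ Icc a b, ∀ t ∈ Icc a b, ∀ y ∈ uIcc (θ s) (θ t),
      ∃ u ∈ uIcc s t, θ u = y := by
    intro s hs t ht y hy
    have hsub : uIcc s t ⊆ Icc a b := Set.ordConnected_Icc.uIcc_subset hs ht
    obtain ⟨u, hu, hu'⟩ := intermediate_value_uIcc (hθ.mono hsub) hy
    exact ⟨u, hu, hu'⟩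
  have hsa : Real.sin (θ a) = 0 := (hsin a ha).1 hima
  have hst : Real.sin (θ tstar) = 0 := (hsin tstar hts).1 himstar
  -- step 1 : |θ tstar - θ a| ≤ π
  have h1 : |θ tstar - θ a| ≤ π := by
    by_contra h
    push_neg at h
    rcases lt_abs.1 h with h | h
    · -- θ a + π < θ tstar
      have hy : θ a + π ∈ uIcc (θ a) (θ tstar) := by
        rw [Set.mem_uIcc]
        left
        constructor <;> linarith
      obtain ⟨u, hu, huy⟩ := key a ha tstar hts _ hy
      rw [Set.uIcc_of_le htstar.1.le] at hu
      have hua : u ≠ a := by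
        intro h'; rw [h'] at huy; linarith
      have hut : u ≠ tstar := by
        intro h'; rw [h'] at huy; linarith
      have huIoc : u ∈ Ioc a b :=
        ⟨lt_of_le_of_ne hu.1 (Ne.symm hua), hu.2.trans htstar.2⟩
      have : Real.sin (θ u) = 0 := by
        rw [huy, Real.sin_add_pi, hsa, neg_zero]
      exact him u huIoc hut ((hsin u ⟨huIoc.1.le, huIoc.2⟩).2 this)
    · -- θ tstar < θ a - π
      have hy : θ a - π ∈ uIcc (θ a) (θ tstar) := by
        rw [Set.mem_uIcc]
        right
        constructor <;> linarith
      obtain ⟨u, hu, huy⟩ := key a ha tstar hts _ hy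
      rw [Set.uIcc_of_le htstar.1.le] at hu
      have hua : u ≠ a := by
        intro h'; rw [h'] at huy; linarith
      have hut : u ≠ tstar := by
        intro h'; rw [h'] at huy; linarith
      have huIoc : u ∈ Ioc a b :=
        ⟨lt_of_le_of_ne hu.1 (Ne.symm hua), hu.2.trans htstar.2⟩
      have : Real.sin (θ u) = 0 := by
        rw [huy, Real.sin_sub_pi, hsa, neg_zero]
      exact him u huIoc hut ((hsin u ⟨huIoc.1.le, huIoc.2⟩).2 this)
  rcases eq_or_lt_of_le htstar.2 with heq | hlt
  · -- tstar = b
    rw [← heq]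
    calc |θ tstar - θ a| ≤ π := h1
    _ < 2 * π := by linarith
  · -- tstar < b
    have hbne : b ≠ tstar := (ne_of_lt hlt).symm
    have hsb : Real.sin (θ b) ≠ 0 := by
      intro h
      exact him b ⟨hab, le_refl b⟩ hbne ((hsin b hb).2 h)
    have h2 : |θ b - θ tstar| < π := by
      by_contra h
      push_neg at h
      rcases le_abs.1 h with h | h
      · -- π ≤ θ b - θ tstar
        have hy : θ tstar + π ∈ uIcc (θ tstar) (θ b) := by
          rw [Set.mem_uIcc]
          left
          constructor <;> linarith
        obtain ⟨u, hu, huy⟩ := key tstar hts b hb _ hy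
        rw [Set.uIcc_of_le hlt.le] at hu
        have hut : u ≠ tstar := by
          intro h'; rw [h'] at huy; linarith
        have hsu : Real.sin (θ u) = 0 := by
          rw [huy, Real.sin_add_pi, hst, neg_zero]
        have hub : u ≠ b := by
          intro h'; rw [h'] at hsu; exact hsb hsu
        have huIoc : u ∈ Ioc a b :=
          ⟨lt_of_lt_of_le htstar.1 hu.1, hu.2⟩
        exact him u huIoc hut ((hsin u ⟨huIoc.1.le, huIoc.2⟩).2 hsu)
      · -- π ≤ θ tstar - θ b
        have hy : θ tstar - π ∈ uIcc (θ tstar) (θ b) := by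
          rw [Set.mem_uIcc]
          right
          constructor <;> linarith
        obtain ⟨u, hu, huy⟩ := key tstar hts b hb _ hy
        rw [Set.uIcc_of_le hlt.le] at hu
        have hut : u ≠ tstar := by
          intro h'; rw [h'] at huy; linarith
        have hsu : Real.sin (θ u) = 0 := by
          rw [huy, Real.sin_sub_pi, hst, neg_zero]
        have hub : u ≠ b := by
          intro h'; rw [h'] at hsu; exact hsb hsu
        have huIoc : u ∈ Ioc a b :=
          ⟨lt_of_lt_of_le htstar.1 hu.1, hu.2⟩
        exact him u huIoc hut ((hsin u ⟨huIoc.1.le, huIoc.2⟩).2 hsu)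
    have := abs_sub_abs_le_abs_sub (θ b - θ a) (θ b - θ tstar)
    have habs : |θ b - θ a| ≤ |θ b - θ tstar| + |θ tstar - θ a| := by
      have := abs_sub_le (θ b) (θ tstar) (θ a)
      calc |θ b - θ a| ≤ |θ b - θ tstar| + |θ tstar - θ a| := this
      _ = _ := rfl
    linarith
end
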